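/- Let A, E, C : (0,1] → ℝ≥0, ε ∈ (0,1], and suppose (i) C(r) ≤ c₁[(ρ/r)³ A(ρ)^{3/4} ε^{3/4} + (r/ρ)³ A(ρ)^{3/2}] for all 0 < r ≤ ρ ≤ 1, (ii) A(r)^{3/2} ≤ c₂[C(2r) + A(2r)^{3/4} C(2r)^{1/2} ε^{3/4}] whenever 2r ≤ 1, and (iii) A(2r) ≤ c₃ (ρ/r) A(ρ) for 2r ≤ ρ. Then setting 𝓔(r) = A(r)^{3/2}, for every δ > 0 there exist constants c, c(δ) > 0 depending only on c₁, c₂, c₃ (and δ for the latter) such that 𝓔(ϑρ) ≤ c[ϑ^{3/4}(ε^{3/4}+1) + δ] 𝓔(ρ) + c(δ) ϑ^{-9}(ε^{3/2} + ε^{9/2}) for all ϑ ∈ (0, 1/2] and ρ ∈ (0,1]. -/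

import Mathlib

/-!
Let `r = ϑρ`. Estimating `C(2r)` by (i) at scales `2r ≤ ρ` and `A(2r)` by (iii), inequality (ii)
bounds `𝓔(r)` by four monomials in `𝓔 = 𝓔(ρ)`: `ϑ⁻³ε^{3/4}𝓔^{1/2}`, `ϑ³𝓔`, the cross term
`ϑ^{-9/4}ε^{9/8}𝓔^{3/4}` and `ϑ^{3/4}ε^{3/4}𝓔`. The second and fourth are already of the required
form since `ϑ ≤ 1`; the first and third are absorbed by Young's inequality with exponents `(2, 2)`
and `(4/3, 4)`, each at the cost of `δ𝓔` plus a multiple of `ϑ⁻⁹` times `ε^{3/2}` resp. `ε^{9/2}`.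
-/

theorem mul_le_mul_sq_add_sq_div {δ : ℝ} (hδ : 0 < δ) (a b : ℝ) :
    a * b ≤ δ * a ^ 2 + b ^ 2 / δ := by
  rw [← sub_nonneg]
  have key : δ * a ^ 2 + b ^ 2 / δ - a * b = ((δ * a - b / 2) ^ 2 + 3 / 4 * b ^ 2) / δ := by
    field_simp; ring
  rw [key]; positivity

theorem pow_three_mul_le_pow_four_add_pow_four {a b : ℝ} (ha : 0 ≤ a) (hb : 0 ≤ b) :
    a ^ 3 * b ≤ a ^ 4 + b ^ 4 := by
  rcases le_total b a with h | h
  · nlinarith [mul_le_mul_of_nonneg_left h (pow_nonneg ha 3), pow_nonneg hb 4]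
  · nlinarith [mul_le_mul_of_nonneg_right (pow_le_pow_left₀ ha h 3) hb, pow_nonneg ha 4]

theorem pow_three_mul_le_mul_pow_four_add_pow_four_div {δ a b : ℝ} (hδ : 0 < δ) (ha : 0 ≤ a)
    (hb : 0 ≤ b) : a ^ 3 * b ≤ δ * a ^ 4 + b ^ 4 / δ ^ 3 := by
  have key := pow_three_mul_le_pow_four_add_pow_four (mul_nonneg hδ.le ha) hb
  rw [← sub_nonneg]
  have e : δ * a ^ 4 + b ^ 4 / δ ^ 3 - a ^ 3 * b
      = ((δ * a) ^ 4 + b ^ 4 - (δ * a) ^ 3 * b) / δ ^ 3 := by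
    field_simp
  rw [e]; exact div_nonneg (by linarith) (by positivity)

theorem sqrt_le_of_le_mul_sq {P c u : ℝ} (hc : 0 ≤ c) (hu : 0 ≤ u) (h : P ≤ c * u ^ 2) :
    √P ≤ √c * u := by
  calc √P ≤ √(c * u ^ 2) := Real.sqrt_le_sqrt h
    _ = √c * u := by rw [Real.sqrt_mul hc, Real.sqrt_sq hu]

theorem le_monomials_of_scaled_bounds {c₁ c₂ k τ w σ P Q E : ℝ} (hc₁ : 0 ≤ c₁) (hc₂ : 0 ≤ c₂)
    (hk : 0 ≤ k) (hτ : 0 < τ) (hw : 0 ≤ w) (hσ : 0 ≤ σ)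
    (hE : E ≤ c₂ * (P + Q * √P * σ ^ 2))
    (hP : P ≤ c₁ * ((8 * τ ^ 4)⁻¹ * w ^ 2 * σ ^ 2 + 8 * τ ^ 4 * w ^ 4))
    (hQ : Q ≤ k * τ⁻¹ * w ^ 2) :
    E ≤ w ^ 2 * (c₁ * c₂ / 8 * (τ ^ 4)⁻¹ * σ ^ 2) + 8 * c₁ * c₂ * w ^ 4 * τ ^ 4
      + w ^ 3 * (c₂ * k * √c₁ * (τ ^ 3)⁻¹ * σ ^ 3) + 3 * (c₂ * k * √c₁) * τ * σ ^ 2 * w ^ 4 := by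
  -- `P ≤ c₁ (u²/8 + 8v²) ≤ c₁ (u + 3v)²`, so the square root splits without subadditivity.
  have hsqrtP : √P ≤ √c₁ * ((τ ^ 2)⁻¹ * w * σ + 3 * τ ^ 2 * w ^ 2) := by
    refine sqrt_le_of_le_mul_sq hc₁ (by positivity) (hP.trans ?_)
    gcongr
    field_simp
    nlinarith [mul_nonneg (mul_nonneg (pow_nonneg hτ.le 4) (pow_nonneg hw 3)) hσ]
  calc E ≤ c₂ * (c₁ * ((8 * τ ^ 4)⁻¹ * w ^ 2 * σ ^ 2 + 8 * τ ^ 4 * w ^ 4)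
        + k * τ⁻¹ * w ^ 2 * (√c₁ * ((τ ^ 2)⁻¹ * w * σ + 3 * τ ^ 2 * w ^ 2)) * σ ^ 2) := by
        refine hE.trans ?_
        gcongr
    _ = _ := by
        field_simp
        ring

theorem energy_decay_of_scaled_bounds {c₁ c₂ k δ : ℝ} (hc₁ : 0 < c₁) (hc₂ : 0 < c₂) (hk : 0 < k)
    (hδ : 0 < δ) :
    ∃ c cδ : ℝ, 0 < c ∧ 0 < cδ ∧ ∀ τ w σ P Q E : ℝ, 0 < τ → τ ≤ 1 → 0 ≤ w → 0 ≤ σ →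
      E ≤ c₂ * (P + Q * √P * σ ^ 2) →
      P ≤ c₁ * ((8 * τ ^ 4)⁻¹ * w ^ 2 * σ ^ 2 + 8 * τ ^ 4 * w ^ 4) →
      Q ≤ k * τ⁻¹ * w ^ 2 →
      E ≤ c * (τ * (σ ^ 2 + 1) + δ) * w ^ 4 + cδ * (τ ^ 12)⁻¹ * (σ ^ 4 + σ ^ 12) := by
  set K := c₂ * k * √c₁
  refine ⟨8 * c₁ * c₂ + 3 * K + 2, (c₁ * c₂) ^ 2 / δ + K ^ 4 / δ ^ 3, by positivity,
    by positivity, ?_⟩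
  intro τ w σ P Q E hτ0 hτ1 hw hσ hE hP hQ
  have hτ4 : τ ^ 4 ≤ τ := pow_le_of_le_one hτ0.le hτ1 (by norm_num)
  have hτ8 : (τ ^ 8)⁻¹ ≤ (τ ^ 12)⁻¹ :=
    inv_anti₀ (by positivity) (pow_le_pow_of_le_one hτ0.le hτ1 (by norm_num))
  have h₁ : w ^ 2 * (c₁ * c₂ / 8 * (τ ^ 4)⁻¹ * σ ^ 2)
      ≤ δ * w ^ 4 + (c₁ * c₂) ^ 2 / δ * (τ ^ 12)⁻¹ * σ ^ 4 := by
    refine (mul_le_mul_sq_add_sq_div hδ _ _).trans ?_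
    calc δ * (w ^ 2) ^ 2 + (c₁ * c₂ / 8 * (τ ^ 4)⁻¹ * σ ^ 2) ^ 2 / δ
        = δ * w ^ 4 + (c₁ * c₂) ^ 2 / δ * ((τ ^ 8)⁻¹ / 64) * σ ^ 4 := by ring
      _ ≤ δ * w ^ 4 + (c₁ * c₂) ^ 2 / δ * (τ ^ 12)⁻¹ * σ ^ 4 := by
        gcongr
        linarith [show 0 ≤ (τ ^ 8)⁻¹ by positivity]
  have h₂ := mul_le_mul_of_nonneg_left hτ4 (show 0 ≤ 8 * c₁ * c₂ * w ^ 4 by positivity)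
  have h₃ : w ^ 3 * (K * (τ ^ 3)⁻¹ * σ ^ 3) ≤ δ * w ^ 4 + K ^ 4 / δ ^ 3 * (τ ^ 12)⁻¹ * σ ^ 12 :=
    (pow_three_mul_le_mul_pow_four_add_pow_four_div hδ hw (by positivity)).trans_eq (by ring)
  have hrest : 0 ≤ (8 * c₁ * c₂ + 2) * τ * σ ^ 2 * w ^ 4 + (3 * K + 2) * τ * w ^ 4
      + (8 * c₁ * c₂ + 3 * K) * δ * w ^ 4 + (c₁ * c₂) ^ 2 / δ * (τ ^ 12)⁻¹ * σ ^ 12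
      + K ^ 4 / δ ^ 3 * (τ ^ 12)⁻¹ * σ ^ 4 := by positivity
  calc E ≤ _ := le_monomials_of_scaled_bounds hc₁.le hc₂.le hk.le hτ0 hw hσ hE hP hQ
    _ ≤ _ := by linear_combination h₁ + h₂ + h₃ + hrest

theorem rpow_eq_pow_rpow {x : ℝ} (hx : 0 ≤ x) {a b : ℝ} (n : ℕ) (h : a * n = b) :
    x ^ b = (x ^ a) ^ n := by
  rw [← h, Real.rpow_mul_natCast hx]

theorem energy_decay_of_rpow_bounds {c₁ c₂ c₃ δ : ℝ} (hc₁ : 0 < c₁) (hc₂ : 0 < c₂) (hc₃ : 0 < c₃)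
    (hδ : 0 < δ) :
    ∃ c cδ : ℝ, 0 < c ∧ 0 < cδ ∧ ∀ ϑ ε x C₂ A₂ E : ℝ, 0 < ϑ → ϑ ≤ 1 → 0 ≤ ε → 0 ≤ x → 0 ≤ A₂ →
      E ≤ c₂ * (C₂ + A₂ ^ ((3 : ℝ) / 4) * C₂ ^ ((1 : ℝ) / 2) * ε ^ ((3 : ℝ) / 4)) →
      C₂ ≤ c₁ * ((2 * ϑ)⁻¹ ^ 3 * x ^ ((3 : ℝ) / 4) * ε ^ ((3 : ℝ) / 4)
        + (2 * ϑ) ^ 3 * x ^ ((3 : ℝ) / 2)) →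
      A₂ ≤ c₃ * ϑ⁻¹ * x →
      E ≤ c * (ϑ ^ ((3 : ℝ) / 4) * (ε ^ ((3 : ℝ) / 4) + 1) + δ) * x ^ ((3 : ℝ) / 2)
        + cδ * ϑ ^ (-(9 : ℝ)) * (ε ^ ((3 : ℝ) / 2) + ε ^ ((9 : ℝ) / 2)) := by
  obtain ⟨c, cδ, hc, hcδ, hdecay⟩ :=
    energy_decay_of_scaled_bounds hc₁ hc₂ (k := c₃ ^ ((3 : ℝ) / 4)) (by positivity) hδ
  refine ⟨c, cδ, hc, hcδ, fun ϑ ε x C₂ A₂ E hϑ0 hϑ1 hε hx hA₂ hE hC hA ↦ ?_⟩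
  -- With these variables every exponent becomes a natural number.
  set τ := ϑ ^ ((3 : ℝ) / 4)
  set w := x ^ ((3 : ℝ) / 8)
  set σ := ε ^ ((3 : ℝ) / 8)
  have hx₂ : x ^ ((3 : ℝ) / 4) = w ^ 2 := rpow_eq_pow_rpow hx 2 (by norm_num)
  have hx₄ : x ^ ((3 : ℝ) / 2) = w ^ 4 := rpow_eq_pow_rpow hx 4 (by norm_num)
  have hε₂ : ε ^ ((3 : ℝ) / 4) = σ ^ 2 := rpow_eq_pow_rpow hε 2 (by norm_num)
  have hε₄ : ε ^ ((3 : ℝ) / 2) = σ ^ 4 := rpow_eq_pow_rpow hε 4 (by norm_num)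
  have hε₁₂ : ε ^ ((9 : ℝ) / 2) = σ ^ 12 := rpow_eq_pow_rpow hε 12 (by norm_num)
  have hϑ₄ : ϑ ^ 3 = τ ^ 4 := by
    rw [← rpow_eq_pow_rpow hϑ0.le 4 (by norm_num : (3 : ℝ) / 4 * (4 : ℕ) = (3 : ℕ)),
      Real.rpow_natCast]
  have hϑ₁₂ : ϑ ^ (-(9 : ℝ)) = (τ ^ 12)⁻¹ := by
    rw [Real.rpow_neg hϑ0.le,
      rpow_eq_pow_rpow hϑ0.le 12 (by norm_num : (3 : ℝ) / 4 * (12 : ℕ) = 9)]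
  have hQ : A₂ ^ ((3 : ℝ) / 4) ≤ c₃ ^ ((3 : ℝ) / 4) * τ⁻¹ * w ^ 2 := by
    calc A₂ ^ ((3 : ℝ) / 4) ≤ (c₃ * ϑ⁻¹ * x) ^ ((3 : ℝ) / 4) :=
          Real.rpow_le_rpow hA₂ hA (by norm_num)
      _ = _ := by
        rw [Real.mul_rpow (by positivity) hx, Real.mul_rpow hc₃.le (by positivity),
          Real.inv_rpow hϑ0.le, hx₂]
  rw [← Real.sqrt_eq_rpow, hε₂] at hE
  rw [inv_pow, mul_pow, hϑ₄, hx₂, hx₄, hε₂, show (2 : ℝ) ^ 3 = 8 by norm_num] at hC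
  rw [hx₄, hε₂, hε₄, hε₁₂, hϑ₁₂]
  exact hdecay τ w σ C₂ _ E (by positivity) (Real.rpow_le_one hϑ0.le hϑ1 (by norm_num))
    (by positivity) (by positivity) hE hC hQ

theorem stmt12_general (A C : ℝ → ℝ) (c₁ c₂ c₃ ε : ℝ)
    (hc₁ : 0 < c₁) (hc₂ : 0 < c₂) (hc₃ : 0 < c₃) (hε : ε ∈ Set.Ioc (0 : ℝ) 1)
    (hA0 : ∀ r ∈ Set.Ioc (0 : ℝ) 1, 0 ≤ A r)
    (hi : ∀ r ρ : ℝ, 0 < r → r ≤ ρ → ρ ≤ 1 →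
      C r ≤ c₁ * ((ρ / r) ^ 3 * (A ρ) ^ ((3 : ℝ) / 4) * ε ^ ((3 : ℝ) / 4)
        + (r / ρ) ^ 3 * (A ρ) ^ ((3 : ℝ) / 2)))
    (hii : ∀ r : ℝ, 0 < r → 2 * r ≤ 1 →
      (A r) ^ ((3 : ℝ) / 2) ≤ c₂ * (C (2 * r)
        + (A (2 * r)) ^ ((3 : ℝ) / 4) * (C (2 * r)) ^ ((1 : ℝ) / 2) * ε ^ ((3 : ℝ) / 4)))
    (hiii : ∀ r ρ : ℝ, 0 < r → 2 * r ≤ ρ → ρ ≤ 1 → A (2 * r) ≤ c₃ * (ρ / r) * A ρ) :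
    ∀ δ : ℝ, 0 < δ → ∃ c cδ : ℝ, 0 < c ∧ 0 < cδ ∧
      ∀ ϑ ∈ Set.Ioc (0 : ℝ) (1 / 2), ∀ ρ ∈ Set.Ioc (0 : ℝ) 1,
        (A (ϑ * ρ)) ^ ((3 : ℝ) / 2)
          ≤ c * (ϑ ^ ((3 : ℝ) / 4) * (ε ^ ((3 : ℝ) / 4) + 1) + δ) * (A ρ) ^ ((3 : ℝ) / 2)
            + cδ * ϑ ^ (-(9 : ℝ)) * (ε ^ ((3 : ℝ) / 2) + ε ^ ((9 : ℝ) / 2)) := by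
  intro δ hδ
  obtain ⟨c, cδ, hc, hcδ, hdecay⟩ := energy_decay_of_rpow_bounds hc₁ hc₂ hc₃ hδ
  refine ⟨c, cδ, hc, hcδ, ?_⟩
  rintro ϑ ⟨hϑ0, hϑ⟩ ρ ⟨hρ0, hρ1⟩
  have hr : 0 < ϑ * ρ := mul_pos hϑ0 hρ0
  have h2r : 2 * (ϑ * ρ) ≤ ρ := by nlinarith
  have hC := hi (2 * (ϑ * ρ)) ρ (by positivity) h2r hρ1
  have hA := hiii (ϑ * ρ) ρ hr h2r hρ1
  rw [show ρ / (2 * (ϑ * ρ)) = (2 * ϑ)⁻¹ by field_simp,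
    show 2 * (ϑ * ρ) / ρ = 2 * ϑ by field_simp] at hC
  rw [show ρ / (ϑ * ρ) = ϑ⁻¹ by field_simp] at hA
  exact hdecay ϑ ε (A ρ) _ _ _ hϑ0 (by linarith) hε.1.le (hA0 ρ ⟨hρ0, hρ1⟩)
    (hA0 _ ⟨by positivity, h2r.trans hρ1⟩) (hii (ϑ * ρ) hr (h2r.trans hρ1)) hC hA

/-- Algebraic combination step of the CKN-type argument: from the two scaled-energy
estimates and Young's inequality one obtains a decay inequality for `𝓔 = A^{3/2}`. -/
theorem stmt12 (A E C : ℝ → ℝ) (c₁ c₂ c₃ ε : ℝ)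
    (hc₁ : 0 < c₁) (hc₂ : 0 < c₂) (hc₃ : 0 < c₃) (hε : ε ∈ Set.Ioc (0 : ℝ) 1)
    (hA0 : ∀ r ∈ Set.Ioc (0 : ℝ) 1, 0 ≤ A r)
    (hC0 : ∀ r ∈ Set.Ioc (0 : ℝ) 1, 0 ≤ C r)
    (hE0 : ∀ r ∈ Set.Ioc (0 : ℝ) 1, 0 ≤ E r)
    (hi : ∀ r ρ : ℝ, 0 < r → r ≤ ρ → ρ ≤ 1 →
      C r ≤ c₁ * ((ρ / r) ^ 3 * (A ρ) ^ ((3 : ℝ) / 4) * ε ^ ((3 : ℝ) / 4)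
        + (r / ρ) ^ 3 * (A ρ) ^ ((3 : ℝ) / 2)))
    (hii : ∀ r : ℝ, 0 < r → 2 * r ≤ 1 →
      (A r) ^ ((3 : ℝ) / 2) ≤ c₂ * (C (2 * r)
        + (A (2 * r)) ^ ((3 : ℝ) / 4) * (C (2 * r)) ^ ((1 : ℝ) / 2) * ε ^ ((3 : ℝ) / 4)))
    (hiii : ∀ r ρ : ℝ, 0 < r → 2 * r ≤ ρ → ρ ≤ 1 → A (2 * r) ≤ c₃ * (ρ / r) * A ρ) :
    ∀ δ : ℝ, 0 < δ → ∃ c cδ : ℝ, 0 < c ∧ 0 < cδ ∧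
      ∀ ϑ ∈ Set.Ioc (0 : ℝ) (1 / 2), ∀ ρ ∈ Set.Ioc (0 : ℝ) 1,
        (A (ϑ * ρ)) ^ ((3 : ℝ) / 2)
          ≤ c * (ϑ ^ ((3 : ℝ) / 4) * (ε ^ ((3 : ℝ) / 4) + 1) + δ) * (A ρ) ^ ((3 : ℝ) / 2)
            + cδ * ϑ ^ (-(9 : ℝ)) * (ε ^ ((3 : ℝ) / 2) + ε ^ ((9 : ℝ) / 2)) :=
  stmt12_general A C c₁ c₂ c₃ ε hc₁ hc₂ hc₃ hε hA0 hi hii hiii
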